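/- arXiv:2308.13682 — 5 statements merged into one kernel-verified Lean document; each statement's English description precedes it below -/
import Mathlib

section
/- Let $p$ be a prime, $n \geq 3$, and $N$ the nilpotent matrix with ones on the superdiagonal and zeros elsewhere. The conjugacy class of $I+N$ in $U_{n+1}(\mathbb{F}_p)$ consists exactly of all upper unitriangular matrices $M$ with $M_{i,i+1} = 1$ for all $1 \leq i \leq n$. -/
open Matrix Finset

section Aux

variable {R : Type*} [CommRing R] {n : ℕ}

/-- The inverse of an upper unitriangular matrix is upper unitriangular. -/
lemma inv_unitri {u v : Matrix (Fin (n+1)) (Fin (n+1)) R}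
    (hd : ∀ i, u i i = 1) (hu : ∀ i j : Fin (n+1), (j:ℕ) < (i:ℕ) → u i j = 0)
    (huv : u * v = 1) :
    ∀ i j : Fin (n+1), (j:ℕ) ≤ (i:ℕ) → v i j = if j = i then 1 else 0 := by
  suffices h : ∀ m : ℕ, ∀ i : Fin (n+1), n - (i:ℕ) < m →
      ∀ j : Fin (n+1), (j:ℕ) ≤ (i:ℕ) → v i j = if j = i then 1 else 0 by
    intro i j hj
    exact h (n + 1) i (by omega) j hj
  intro m
  induction m with
  | zero => intro i hi; omega
  | succ m ih =>
    intro i hi j hj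
    have h1 : (1 : Matrix (Fin (n+1)) (Fin (n+1)) R) i j = ∑ k, u i k * v k j := by
      rw [← huv, Matrix.mul_apply]
    rw [Finset.sum_eq_single i] at h1
    · rw [hd i, one_mul] at h1
      rw [← h1, Matrix.one_apply]
      by_cases h : j = i
      · simp [h]
      · rw [if_neg h, if_neg (fun hh => h hh.symm)]
    · intro k _ hk
      have hk' : (k:ℕ) ≠ (i:ℕ) := fun h => hk (Fin.ext h)
      rcases lt_or_gt_of_ne hk' with h | h
      · rw [hu i k h, zero_mul]
      · have hkn : (k:ℕ) ≤ n := by omega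
        have hv0 : v k j = 0 := by
          rw [ih k (by omega) j (by omega)]
          have : j ≠ k := fun hjk => by subst hjk; omega
          simp [this]
        rw [hv0, mul_zero]
    · intro h; exact absurd (Finset.mem_univ i) h

/-- Columns of the conjugating matrix, built by descending recursion on column index. -/
def col (n : ℕ) (M : Matrix (Fin (n+1)) (Fin (n+1)) R) : ℕ → Fin (n+1) → R
  | 0 => fun i => if (i:ℕ) = n then 1 else 0
  | (c+1) => fun i =>
      ∑ k ∈ Finset.univ.filter (fun k : Fin (n+1) => (i:ℕ) < (k:ℕ)), M i k * col n M c k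

lemma col_zero_of_lt (M : Matrix (Fin (n+1)) (Fin (n+1)) R) :
    ∀ c : ℕ, ∀ i : Fin (n+1), n - c < (i:ℕ) → col n M c i = 0 := by
  intro c
  induction c with
  | zero =>
    intro i hi
    have : (i:ℕ) ≤ n := by omega
    omega
  | succ c ih =>
    intro i hi
    show ∑ k ∈ Finset.univ.filter (fun k : Fin (n+1) => (i:ℕ) < (k:ℕ)),
        M i k * col n M c k = 0
    apply Finset.sum_eq_zero
    intro k hk
    rw [Finset.mem_filter] at hk
    rw [ih k (by omega), mul_zero]

lemma col_one (M : Matrix (Fin (n+1)) (Fin (n+1)) R)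
    (hsd : ∀ i j : Fin (n+1), (j:ℕ) = (i:ℕ) + 1 → M i j = 1) :
    ∀ c : ℕ, c ≤ n → ∀ i : Fin (n+1), (i:ℕ) = n - c → col n M c i = 1 := by
  intro c
  induction c with
  | zero =>
    intro _ i hi
    show (if (i:ℕ) = n then 1 else 0) = 1
    simp [hi]
  | succ c ih =>
    intro hc i hi
    show ∑ k ∈ Finset.univ.filter (fun k : Fin (n+1) => (i:ℕ) < (k:ℕ)),
        M i k * col n M c k = 1
    have hiv : (i:ℕ) + 1 ≤ n := by omega
    set k₀ : Fin (n+1) := ⟨(i:ℕ) + 1, by omega⟩ with hk₀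
    rw [Finset.sum_eq_single_of_mem k₀ (Finset.mem_filter.mpr ⟨Finset.mem_univ _, Nat.lt_succ_self _⟩)]
    · have h1 : M i k₀ = 1 := hsd i k₀ rfl
      have h2 : col n M c k₀ = 1 := ih (by omega) k₀ (by simp [hk₀]; omega)
      rw [h1, h2, one_mul]
    · intro k hk hkne
      rw [Finset.mem_filter] at hk
      have : (k:ℕ) ≠ (i:ℕ) + 1 := fun h => hkne (Fin.ext h)
      have hkgt : n - c < (k:ℕ) := by omega
      rw [col_zero_of_lt M c k hkgt, mul_zero]

end Aux

/-- The conjugacy class of `I + N` in the group of upper unitriangular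
`(n+1)×(n+1)` matrices over `𝔽_p` consists exactly of the upper unitriangular matrices
with all superdiagonal entries equal to `1`. -/
theorem stmt2 (p : ℕ) (hp : p.Prime) (n : ℕ) (hn : 3 ≤ n)
    (N : Matrix (Fin (n+1)) (Fin (n+1)) (ZMod p))
    (hN : ∀ i j : Fin (n+1), N i j = if (j : ℕ) = (i : ℕ) + 1 then 1 else 0) :
    {M : Matrix (Fin (n+1)) (Fin (n+1)) (ZMod p) |
        ∃ u v : Matrix (Fin (n+1)) (Fin (n+1)) (ZMod p),
          (∀ i, u i i = 1) ∧ (∀ i j : Fin (n+1), (j : ℕ) < (i : ℕ) → u i j = 0) ∧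
          u * v = 1 ∧ v * u = 1 ∧ M = u * (1 + N) * v} =
    {M : Matrix (Fin (n+1)) (Fin (n+1)) (ZMod p) |
        (∀ i, M i i = 1) ∧ (∀ i j : Fin (n+1), (j : ℕ) < (i : ℕ) → M i j = 0) ∧
        ∀ i : Fin n, M i.castSucc i.succ = 1} := by
  ext M
  simp only [Set.mem_setOf_eq]
  constructor
  · -- forward: conjugates of 1+N are unitriangular with superdiagonal 1
    rintro ⟨u, v, hud, hut, huv, hvu, rfl⟩
    have hv := inv_unitri hud hut huv
    have hMeq : u * (1 + N) * v = 1 + u * N * v := by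
      rw [mul_add, mul_one, add_mul, huv]
    have hA0 : ∀ i j : Fin (n+1), (j:ℕ) ≤ (i:ℕ) → (u * N) i j = 0 := by
      intro i j hij
      rw [Matrix.mul_apply]
      apply Finset.sum_eq_zero
      intro k _
      rw [hN k j]
      by_cases h : (j:ℕ) = (k:ℕ) + 1
      · rw [if_pos h, mul_one, hut i k (by omega)]
      · rw [if_neg h, mul_zero]
    have hA1 : ∀ i j : Fin (n+1), (j:ℕ) = (i:ℕ) + 1 → (u * N) i j = 1 := by
      intro i j hij
      rw [Matrix.mul_apply, Finset.sum_eq_single i]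
      · rw [hud i, one_mul, hN i j, if_pos hij]
      · intro k _ hk
        have : (j:ℕ) ≠ (k:ℕ) + 1 := by
          intro h
          exact hk (Fin.ext (by omega))
        rw [hN k j, if_neg this, mul_zero]
      · intro h; exact absurd (Finset.mem_univ i) h
    have hB0 : ∀ i j : Fin (n+1), (j:ℕ) ≤ (i:ℕ) → (u * N * v) i j = 0 := by
      intro i j hij
      rw [Matrix.mul_apply]
      apply Finset.sum_eq_zero
      intro k _
      by_cases h : (k:ℕ) ≤ (i:ℕ)
      · rw [hA0 i k h, zero_mul]
      · have hjk : (j:ℕ) ≤ (k:ℕ) := by omega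
        have : v k j = 0 := by
          rw [hv k j hjk]
          have : j ≠ k := fun hh => by subst hh; omega
          simp [this]
        rw [this, mul_zero]
    have hB1 : ∀ i j : Fin (n+1), (j:ℕ) = (i:ℕ) + 1 → (u * N * v) i j = 1 := by
      intro i j hij
      rw [Matrix.mul_apply, Finset.sum_eq_single j]
      · rw [hA1 i j hij, one_mul, hv j j le_rfl, if_pos rfl]
      · intro k _ hk
        by_cases h : (k:ℕ) ≤ (i:ℕ)
        · rw [hA0 i k h, zero_mul]
        · have hkj : (k:ℕ) ≠ (j:ℕ) := fun hh => hk (Fin.ext hh)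
          have hjk : (j:ℕ) ≤ (k:ℕ) := by omega
          have : v k j = 0 := by
            rw [hv k j hjk]
            have : j ≠ k := fun hh => by subst hh; omega
            simp [this]
          rw [this, mul_zero]
      · intro h; exact absurd (Finset.mem_univ j) h
    refine ⟨?_, ?_, ?_⟩
    · intro i
      rw [hMeq, Matrix.add_apply, Matrix.one_apply_eq, hB0 i i le_rfl, add_zero]
    · intro i j hij
      have hne : i ≠ j := fun h => by subst h; omega
      rw [hMeq, Matrix.add_apply, Matrix.one_apply_ne hne, hB0 i j (by omega), add_zero]
    · intro i
      have hval : ((i.succ : Fin (n+1)):ℕ) = ((i.castSucc : Fin (n+1)):ℕ) + 1 := by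
        simp
      have hne : (i.castSucc : Fin (n+1)) ≠ i.succ := fun h => by
        have := congrArg Fin.val h
        omega
      rw [hMeq, Matrix.add_apply, Matrix.one_apply_ne hne,
        hB1 i.castSucc i.succ hval, zero_add]
  · -- reverse: build the conjugating matrix
    rintro ⟨hMd, hMl, hMs⟩
    have hsd : ∀ i j : Fin (n+1), (j:ℕ) = (i:ℕ) + 1 → M i j = 1 := by
      intro i j hij
      have hi : (i:ℕ) < n := by have := j.isLt; omega
      have h1 : (⟨(i:ℕ), hi⟩ : Fin n).castSucc = i := Fin.ext (by simp)
      have h2 : (⟨(i:ℕ), hi⟩ : Fin n).succ = j := Fin.ext (by simp [hij.symm])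
      rw [← h1, ← h2]
      exact hMs ⟨(i:ℕ), hi⟩
    set u : Matrix (Fin (n+1)) (Fin (n+1)) (ZMod p) :=
      Matrix.of (fun i j : Fin (n+1) => col n M (n - (j:ℕ)) i) with hu_def
    have hu_apply : ∀ i j : Fin (n+1), u i j = col n M (n - (j:ℕ)) i := fun i j => rfl
    have hud : ∀ i, u i i = 1 := by
      intro i
      rw [hu_apply]
      exact col_one M hsd (n - (i:ℕ)) (by omega) i (by have := i.isLt; omega)
    have hut : ∀ i j : Fin (n+1), (j:ℕ) < (i:ℕ) → u i j = 0 := by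
      intro i j hij
      rw [hu_apply]
      exact col_zero_of_lt M (n - (j:ℕ)) i (by have := j.isLt; omega)
    -- the key relation: M * u = u * (1 + N)
    have hMu : M * u = u * (1 + N) := by
      ext i j
      have hLHS : (M * u) i j = u i j +
          ∑ k ∈ Finset.univ.filter (fun k : Fin (n+1) => (i:ℕ) < (k:ℕ)),
            M i k * u k j := by
        rw [Matrix.mul_apply,
          ← Finset.sum_filter_add_sum_filter_not Finset.univ
            (fun k : Fin (n+1) => (i:ℕ) < (k:ℕ)) (fun k => M i k * u k j)]
        have hrest : ∑ k ∈ Finset.univ.filter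
            (fun k : Fin (n+1) => ¬ (i:ℕ) < (k:ℕ)), M i k * u k j = u i j := by
          rw [Finset.sum_eq_single_of_mem i (by simp)]
          · rw [hMd i, one_mul]
          · intro k hk hki
            rw [Finset.mem_filter] at hk
            have : (k:ℕ) < (i:ℕ) := by
              have : (k:ℕ) ≠ (i:ℕ) := fun h => hki (Fin.ext h)
              omega
            rw [hMl i k this, zero_mul]
        rw [hrest, add_comm]
      have hS : ∑ k ∈ Finset.univ.filter (fun k : Fin (n+1) => (i:ℕ) < (k:ℕ)),
          M i k * u k j = col n M ((n - (j:ℕ)) + 1) i := rfl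
      have hRHS : (u * (1 + N)) i j = u i j + (u * N) i j := by
        rw [mul_add, mul_one, Matrix.add_apply]
      rw [hLHS, hS, hRHS]
      congr 1
      -- col n M ((n - j) + 1) i = (u * N) i j
      by_cases hj : (j:ℕ) = 0
      · have hN0 : (u * N) i j = 0 := by
          rw [Matrix.mul_apply]
          apply Finset.sum_eq_zero
          intro k _
          rw [hN k j]
          have : (j:ℕ) ≠ (k:ℕ) + 1 := by omega
          rw [if_neg this, mul_zero]
        rw [hj, hN0, Nat.sub_zero]
        show ∑ k ∈ Finset.univ.filter (fun k : Fin (n+1) => (i:ℕ) < (k:ℕ)),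
            M i k * col n M n k = 0
        apply Finset.sum_eq_zero
        intro k hk
        rw [Finset.mem_filter] at hk
        rw [col_zero_of_lt M n k (by omega), mul_zero]
      · have hjn : (j:ℕ) ≤ n := by have := j.isLt; omega
        set k₀ : Fin (n+1) := ⟨(j:ℕ) - 1, by omega⟩ with hk₀
        have hNval : (u * N) i j = u i k₀ := by
          rw [Matrix.mul_apply, Finset.sum_eq_single k₀]
          · rw [hN k₀ j, if_pos (by simp [hk₀]; omega), mul_one]
          · intro k _ hk
            have : (j:ℕ) ≠ (k:ℕ) + 1 := by
              intro h
              apply hk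
              apply Fin.ext
              simp [hk₀]
              omega
            rw [hN k j, if_neg this, mul_zero]
          · intro h; exact absurd (Finset.mem_univ k₀) h
        rw [hNval, hu_apply]
        have : n - ((k₀:ℕ)) = (n - (j:ℕ)) + 1 := by
          simp only [hk₀]
          omega
        rw [this]
    -- invertibility of u
    have hbt : u.BlockTriangular id := by
      intro i j hij
      exact hut i j hij
    have hdet : u.det = 1 := by
      rw [Matrix.det_of_upperTriangular hbt]
      exact Finset.prod_eq_one (fun i _ => hud i)
    have hunit : IsUnit u.det := by rw [hdet]; exact isUnit_one
    refine ⟨u, u⁻¹, hud, hut, Matrix.mul_nonsing_inv u hunit,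
      Matrix.nonsing_inv_mul u hunit, ?_⟩
    calc M = M * (u * u⁻¹) := by rw [Matrix.mul_nonsing_inv u hunit, mul_one]
      _ = (M * u) * u⁻¹ := by rw [mul_assoc]
      _ = u * (1 + N) * u⁻¹ := by rw [hMu]
end

section
/- Let $G = \langle a, b \mid a^2 b = b a^2 \rangle$. There is no group homomorphism $f \colon G \to U_4(\mathbb{F}_2)$ such that $f(a)$ is conjugate in $U_4(\mathbb{F}_2)$ to the matrix $I + N$ (ones on the superdiagonal) and $f(b)$ has superdiagonal entries $(f(b)_{1,2}, f(b)_{2,3}, f(b)_{3,4}) = (1, 0, 0)$. -/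
/-- The single relation `a² b (b a²)⁻¹` defining `G = ⟨a, b ∣ a²b = ba²⟩`,
with `a = of true`, `b = of false`. -/
def grpRels : Set (FreeGroup Bool) :=
  {FreeGroup.of true ^ 2 * FreeGroup.of false *
    (FreeGroup.of false * FreeGroup.of true ^ 2)⁻¹}

/-- `M` is upper unitriangular. -/
def UniTri {n : ℕ} (M : Matrix (Fin n) (Fin n) (ZMod 2)) : Prop :=
  (∀ i, M i i = 1) ∧ ∀ i j : Fin n, (j : ℕ) < (i : ℕ) → M i j = 0

/-- There is no homomorphism `f` from `G = ⟨a, b ∣ a²b = ba²⟩` to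
`U₄(𝔽₂)` such that `f a` is conjugate in `U₄(𝔽₂)` to `I + N` and `f b` has
superdiagonal `(1, 0, 0)`. -/
theorem stmt4 (N : Matrix (Fin 4) (Fin 4) (ZMod 2))
    (hN : ∀ i j : Fin 4, N i j = if (j : ℕ) = (i : ℕ) + 1 then 1 else 0) :
    ¬ ∃ f : PresentedGroup grpRels →* Matrix (Fin 4) (Fin 4) (ZMod 2),
      (∀ g : PresentedGroup grpRels, UniTri (f g)) ∧
      (∃ u v : Matrix (Fin 4) (Fin 4) (ZMod 2), UniTri u ∧ u * v = 1 ∧ v * u = 1 ∧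
        f (PresentedGroup.of true) = u * (1 + N) * v) ∧
      f (PresentedGroup.of false) 0 1 = 1 ∧
      f (PresentedGroup.of false) 1 2 = 0 ∧
      f (PresentedGroup.of false) 2 3 = 0 := by
  rintro ⟨f, huni, ⟨u, v, hu, huv, hvu, hA⟩, hb01, hb12, hb23⟩
  -- the relation holds in the presented group
  have hrel : (PresentedGroup.of true : PresentedGroup grpRels) ^ 2 * PresentedGroup.of false
      = PresentedGroup.of false * PresentedGroup.of true ^ 2 := by
    have h1 : (PresentedGroup.mk grpRels) (FreeGroup.of true ^ 2 * FreeGroup.of false *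
        (FreeGroup.of false * FreeGroup.of true ^ 2)⁻¹) = 1 := by
      apply (QuotientGroup.eq_one_iff _).mpr
      exact Subgroup.subset_normalClosure rfl
    simp only [map_mul, map_inv, map_pow] at h1
    have h2 := mul_eq_one_iff_eq_inv.mp h1
    rw [inv_inv] at h2
    exact h2
  set B := f (PresentedGroup.of false) with hBdef
  -- f sends the relation to a matrix identity
  have hcomm : (u*(1+N)*v) * (u*(1+N)*v) * B = B * ((u*(1+N)*v) * (u*(1+N)*v)) := by
    have h3 := congrArg f hrel
    simp only [map_mul, map_pow, pow_two, hA] at h3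
    exact h3
  -- the square of f a is 1 + u N² v, and it commutes with B
  have hNN : N + N = 0 := by
    ext i j
    exact CharTwo.add_self_eq_zero _
  have hA2 : (u*(1+N)*v) * (u*(1+N)*v) = 1 + u*(N*N)*v := by
    have e1 : (u*(1+N)*v) * (u*(1+N)*v) = u*((1+N)*((v*u)*((1+N)*v))) := by
      simp only [mul_assoc]
    rw [hvu, one_mul] at e1
    rw [e1]
    have e2 : (1+N)*((1+N)*v) = (1 + N*N) * v := by
      rw [← mul_assoc]
      congr 1
      rw [mul_add, add_mul, add_mul, one_mul, mul_one, one_mul]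
      rw [add_assoc, ← add_assoc N N (N*N), hNN, zero_add]
    rw [e2, add_mul, one_mul, mul_add, ← mul_assoc u (N*N) v, huv]
  rw [hA2, add_mul, one_mul, mul_add, mul_one] at hcomm
  replace hcomm := add_left_cancel hcomm
  -- N² commutes with C := v B u
  have hC : (N*N) * (v*B*u) = (v*B*u) * (N*N) := by
    have h3 := congrArg (fun X => v * X * u) hcomm
    simp only [mul_assoc] at h3 ⊢
    rw [← mul_assoc v u, hvu, one_mul] at h3
    rw [h3]
    simp only [mul_one]
  -- entry facts
  obtain ⟨hud, hul⟩ := hu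
  obtain ⟨hBd, hBl⟩ := huni (PresentedGroup.of false)
  have u10 : u 1 0 = 0 := hul 1 0 (by decide)
  have u20 : u 2 0 = 0 := hul 2 0 (by decide)
  have u30 : u 3 0 = 0 := hul 3 0 (by decide)
  have u21 : u 2 1 = 0 := hul 2 1 (by decide)
  have u31 : u 3 1 = 0 := hul 3 1 (by decide)
  have u32 : u 3 2 = 0 := hul 3 2 (by decide)
  have u00 : u 0 0 = 1 := hud 0
  have u11 : u 1 1 = 1 := hud 1
  have u22 : u 2 2 = 1 := hud 2
  have u33 : u 3 3 = 1 := hud 3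
  have B10 : B 1 0 = 0 := hBl 1 0 (by decide)
  have B20 : B 2 0 = 0 := hBl 2 0 (by decide)
  have B30 : B 3 0 = 0 := hBl 3 0 (by decide)
  have B21 : B 2 1 = 0 := hBl 2 1 (by decide)
  have B31 : B 3 1 = 0 := hBl 3 1 (by decide)
  have B32 : B 3 2 = 0 := hBl 3 2 (by decide)
  have B00 : B 0 0 = 1 := hBd 0
  have B11 : B 1 1 = 1 := hBd 1
  have B22 : B 2 2 = 1 := hBd 2
  have B33 : B 3 3 = 1 := hBd 3
  -- facts about v, from v * u = 1
  have hv00 : v 0 0 = 1 := by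
    have := congrFun (congrFun hvu 0) 0
    simpa [Matrix.mul_apply, Fin.sum_univ_four, Matrix.one_apply, u10, u20, u30, u00] using this
  have hv01 : v 0 0 * u 0 1 + v 0 1 = 0 := by
    have := congrFun (congrFun hvu 0) 1
    simpa [Matrix.mul_apply, Fin.sum_univ_four, Matrix.one_apply, u21, u31, u11] using this
  have hv20 : v 2 0 = 0 := by
    have := congrFun (congrFun hvu 2) 0
    simpa [Matrix.mul_apply, Fin.sum_univ_four, Matrix.one_apply, u10, u20, u30, u00] using this
  have hv21 : v 2 1 = 0 := by
    have := congrFun (congrFun hvu 2) 1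
    simpa [Matrix.mul_apply, Fin.sum_univ_four, Matrix.one_apply, u21, u31, u11, hv20] using this
  have hv22 : v 2 2 = 1 := by
    have := congrFun (congrFun hvu 2) 2
    simpa [Matrix.mul_apply, Fin.sum_univ_four, Matrix.one_apply, u32, u22, hv20, hv21] using this
  have hv23 : v 2 2 * u 2 3 + v 2 3 = 0 := by
    have := congrFun (congrFun hvu 2) 3
    simpa [Matrix.mul_apply, Fin.sum_univ_four, Matrix.one_apply, u33, hv20, hv21] using this
  rw [hv00, one_mul] at hv01
  rw [hv22, one_mul] at hv23
  have c0 : ((0 : Fin 4) : ℕ) = 0 := rfl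
  have c1 : ((1 : Fin 4) : ℕ) = 1 := rfl
  have c2 : ((2 : Fin 4) : ℕ) = 2 := rfl
  have c3 : ((3 : Fin 4) : ℕ) = 3 := rfl
  have hN2 : ∀ i j : Fin 4, (N*N) i j = if (j : ℕ) = (i : ℕ) + 2 then 1 else 0 := by
    intro i j
    fin_cases i <;> fin_cases j <;>
      simp [Matrix.mul_apply, Fin.sum_univ_four, hN, c0, c1, c2, c3]
  set C := v * B * u with hCdef
  have hkey := congrFun (congrFun hC 0) 3
  simp only [Matrix.mul_apply, Fin.sum_univ_four, hN2, c0, c1, c2, c3] at hkey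
  norm_num at hkey
  have hC01 : C 0 1 = 1 := by
    rw [hCdef]
    simp only [Matrix.mul_apply, Fin.sum_univ_four, u10, u20, u30, u21, u31, u32, u00, u11,
      u22, u33, B10, B20, B30, B21, B31, B32, B00, B11, B22, B33, hv00, hb01,
      mul_zero, zero_mul, mul_one, one_mul, add_zero, zero_add]
    linear_combination hv01
  have hC23 : C 2 3 = 0 := by
    rw [hCdef]
    simp only [Matrix.mul_apply, Fin.sum_univ_four, u10, u20, u30, u21, u31, u32, u00, u11,
      u22, u33, B10, B20, B30, B21, B31, B32, B00, B11, B22, B33, hv20, hv21, hv22, hb23,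
      mul_zero, zero_mul, mul_one, one_mul, add_zero, zero_add]
    linear_combination hv23
  rw [hC01, hC23] at hkey
  exact absurd hkey (by decide)
end

section
/- Let $G = \langle a, b \mid a^2 b = b a^2 \rangle$, let $f \colon G \to \mathbb{Z}/2\mathbb{Z}$ be the homomorphism with $f(a) = 0$ and $f(b) = 1$, and let $H = \ker f$. Let $\chi \colon H \to \mathbb{Z}/2\mathbb{Z}$ be the homomorphism obtained by composing the map $H \to U_3(\mathbb{F}_2)$ (induced by $a \mapsto \sigma_1$, $b \mapsto \sigma_2$) with the $(1,3)$ coordinate function. Then $\chi$ does not lift to a homomorphism $H \to \mathbb{Z}/4\mathbb{Z}$; that is, there is no homomorphism $\widetilde\chi \colon H \to \mathbb{Z}/4\mathbb{Z}$ whose composition with the reduction $\mathbb{Z}/4\mathbb{Z} \to \mathbb{Z}/2\mathbb{Z}$ equals $\chi$. -/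
/-- `σ₁ ∈ U₃(𝔽₂)`: single off-diagonal `1` in position `(1,2)`. -/
def sigma1 : (Matrix (Fin 3) (Fin 3) (ZMod 2))ˣ :=
  ⟨!![1,1,0; 0,1,0; 0,0,1], !![1,1,0; 0,1,0; 0,0,1], by decide, by decide⟩

/-- `σ₂ ∈ U₃(𝔽₂)`: single off-diagonal `1` in position `(2,3)`. -/
def sigma2 : (Matrix (Fin 3) (Fin 3) (ZMod 2))ˣ :=
  ⟨!![1,0,0; 0,1,1; 0,0,1], !![1,0,0; 0,1,1; 0,0,1], by decide, by decide⟩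

theorem conj_sq_eq_sq_of_commute {G : Type*} [Group G] {a b : G} (h : Commute b (a ^ 2)) :
    (b * a * b⁻¹) ^ 2 = a ^ 2 := by
  rw [conj_pow, h.eq, mul_inv_cancel_right]

theorem ZMod.castHom_two_eq_of_two_mul_eq {u v : ZMod 4} (h : 2 * u = 2 * v) :
    ZMod.castHom (by norm_num : (2 : ℕ) ∣ 4) (ZMod 2) u =
      ZMod.castHom (by norm_num : (2 : ℕ) ∣ 4) (ZMod 2) v := by
  revert u v
  decide

theorem castHom_two_toAdd_eq_of_sq_eq {H : Type*} [Group H]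
    (ψ : H →* Multiplicative (ZMod 4)) {x y : H} (h : x ^ 2 = y ^ 2) :
    ZMod.castHom (by norm_num : (2 : ℕ) ∣ 4) (ZMod 2) (Multiplicative.toAdd (ψ x)) =
      ZMod.castHom (by norm_num : (2 : ℕ) ∣ 4) (ZMod 2) (Multiplicative.toAdd (ψ y)) := by
  apply ZMod.castHom_two_eq_of_two_mul_eq
  simpa only [map_pow, toAdd_pow, two_mul, two_nsmul] using congrArg (fun z => Multiplicative.toAdd (ψ z)) h

theorem grpRels_commute_of_of_sq :
    Commute (PresentedGroup.of false : PresentedGroup grpRels) (PresentedGroup.of true ^ 2) := by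
  have h := PresentedGroup.one_of_mem (rels := grpRels) (Set.mem_singleton _)
  simp only [map_mul, map_inv, map_pow] at h
  exact (mul_inv_eq_one.mp h).symm

theorem sigma1_val_zero_two : sigma1.val 0 2 = 0 := rfl

theorem conj_sigma1_val_zero_two : (sigma2 * sigma1 * sigma2⁻¹).val 0 2 = 1 := by
  decide

/-- Let `G = ⟨a, b ∣ a²b = ba²⟩`, let `f : G → ℤ/2ℤ` be the homomorphism
with `f a = 0`, `f b = 1`, and `H = ker f`. Let `φ : G → U₃(𝔽₂)` be the homomorphism
with `φ a = σ₁`, `φ b = σ₂`, and let `χ : H → ℤ/2ℤ` be `h ↦ (φ h)₁₃`. Then `χ` admits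
no lift to a homomorphism `H → ℤ/4ℤ` along the reduction `ℤ/4ℤ → ℤ/2ℤ`. -/
theorem stmt6
    (φ : PresentedGroup grpRels →* (Matrix (Fin 3) (Fin 3) (ZMod 2))ˣ)
    (hφa : φ (PresentedGroup.of true) = sigma1)
    (hφb : φ (PresentedGroup.of false) = sigma2)
    (f : PresentedGroup grpRels →* Multiplicative (ZMod 2))
    (hfa : f (PresentedGroup.of true) = Multiplicative.ofAdd (0 : ZMod 2)) :
    ¬ ∃ χ' : ↥f.ker →* Multiplicative (ZMod 4),
        ∀ h : ↥f.ker,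
          ZMod.castHom (by norm_num : (2 : ℕ) ∣ 4) (ZMod 2)
              (Multiplicative.toAdd (χ' h)) =
            (φ (h : PresentedGroup grpRels)).val 0 2 := by
  rintro ⟨χ', hχ'⟩
  set a : PresentedGroup grpRels := PresentedGroup.of true
  set b : PresentedGroup grpRels := PresentedGroup.of false
  have ha : a ∈ f.ker := hfa
  have hc : b * a * b⁻¹ ∈ f.ker := f.normal_ker.conj_mem a ha b
  have hsq : (⟨a, ha⟩ : f.ker) ^ 2 = ⟨b * a * b⁻¹, hc⟩ ^ 2 :=
    Subtype.ext (conj_sq_eq_sq_of_commute grpRels_commute_of_of_sq).symm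
  have key := castHom_two_toAdd_eq_of_sq_eq χ' hsq
  rw [hχ', hχ'] at key
  simp only [map_mul, map_inv, hφa, hφb, sigma1_val_zero_two, conj_sigma1_val_zero_two] at key
  exact zero_ne_one key
end

section
/- Let $A = \bigoplus_{i \geq 0} A^i$ be a differential graded ring with differential $\partial$ of degree $1$, and let $a_1, \dots, a_n \in H^1(A)$ with $n \geq 2$. Suppose the Massey product $\langle a_1, \dots, a_n \rangle$ is defined (i.e., admits a defining system) and $a_k = 0$ for some $k \in \{1, \dots, n\}$. Then the Massey product $\langle a_1, \dots, a_n \rangle$ vanishes, i.e., $0 \in \langle a_1, \dots, a_n \rangle$. -/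
/-- In a differential graded ring, if the Massey product
`⟨a₁, …, aₙ⟩` is defined and some `a_k = 0` in `H¹`, then it vanishes
(i.e. `0 ∈ ⟨a₁, …, aₙ⟩`).

The degree-0,1,2 part of the DGA is modeled by abelian groups `A0, A1, A2`,
differentials `d0 : A0 → A1`, `d1 : A1 → A2` with `d1 ∘ d0 = 0`, and the
(biadditive) multiplication `mul : A1 → A1 → A2`. Classes in `H¹` are represented
by cocycles `a i ∈ A1`; a defining system is `M i j` (`1 ≤ i < j ≤ n+1`,
`(i,j) ≠ (1,n+1)`) with `M i (i+1)` a cocycle representing `a i` and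
`d1 (M i j) = -∑_{i<l<j} M i l * M l j`; its value is
`-∑_{1<l<n+1} M 1 l * M l (n+1)`, and vanishing of the Massey product means some
defining system has value in the image of `d1`. -/
theorem stmt10 (A0 A1 A2 : Type*) [AddCommGroup A0] [AddCommGroup A1] [AddCommGroup A2]
    (d0 : A0 →+ A1) (d1 : A1 →+ A2) (hd : ∀ x : A0, d1 (d0 x) = 0)
    (mul : A1 →+ A1 →+ A2)
    (n : ℕ) (hn : 2 ≤ n) (a : ℕ → A1)
    (hcocycle : ∀ i, 1 ≤ i → i ≤ n → d1 (a i) = 0)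
    (k : ℕ) (hk1 : 1 ≤ k) (hkn : k ≤ n) (hak : ∃ x : A0, a k = d0 x)
    (hdef : ∃ M : ℕ → ℕ → A1,
      (∀ i, 1 ≤ i → i ≤ n → d1 (M i (i+1)) = 0 ∧ ∃ x : A0, M i (i+1) - a i = d0 x) ∧
      (∀ i j, 1 ≤ i → i + 1 < j → j ≤ n + 1 → (i, j) ≠ (1, n+1) →
        d1 (M i j) = -∑ l ∈ Finset.Ioo i j, mul (M i l) (M l j))) :
    ∃ M : ℕ → ℕ → A1,
      ((∀ i, 1 ≤ i → i ≤ n → d1 (M i (i+1)) = 0 ∧ ∃ x : A0, M i (i+1) - a i = d0 x) ∧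
       (∀ i j, 1 ≤ i → i + 1 < j → j ≤ n + 1 → (i, j) ≠ (1, n+1) →
         d1 (M i j) = -∑ l ∈ Finset.Ioo i j, mul (M i l) (M l j))) ∧
      ∃ y : A1, -∑ l ∈ Finset.Ioo 1 (n+1), mul (M 1 l) (M l (n+1)) = d1 y := by
  obtain ⟨x, hx⟩ := hak
  obtain ⟨M, hM1, hM2⟩ := hdef
  refine ⟨fun i j => if i ≤ k ∧ k < j then 0 else M i j, ⟨?_, ?_⟩, 0, ?_⟩
  · intro i hi1 hin
    simp only
    by_cases h : i ≤ k ∧ k < i + 1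
    · have hik : i = k := by omega
      rw [if_pos h]
      refine ⟨map_zero d1, -x, ?_⟩
      rw [hik, hx]
      simp
    · rw [if_neg h]
      exact hM1 i hi1 hin
  · intro i j hi hij hj hne
    simp only
    by_cases h : i ≤ k ∧ k < j
    · rw [if_pos h, map_zero]
      symm
      rw [neg_eq_zero]
      apply Finset.sum_eq_zero
      intro l hl
      simp only [Finset.mem_Ioo] at hl
      by_cases hlk : l ≤ k
      · have h2 : (if l ≤ k ∧ k < j then (0:A1) else M l j) = 0 := if_pos ⟨hlk, h.2⟩
        rw [h2, map_zero]
      · have h1 : (if i ≤ k ∧ k < l then (0:A1) else M i l) = 0 :=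
          if_pos ⟨h.1, by omega⟩
        rw [h1, map_zero, AddMonoidHom.zero_apply]
    · rw [if_neg h]
      have hij' : i < j := by omega
      have hcase : k < i ∨ j ≤ k := by omega
      have heq : ∀ l ∈ Finset.Ioo i j,
          mul (if i ≤ k ∧ k < l then (0:A1) else M i l)
            (if l ≤ k ∧ k < j then (0:A1) else M l j) = mul (M i l) (M l j) := by
        intro l hl
        simp only [Finset.mem_Ioo] at hl
        have h1 : ¬ (i ≤ k ∧ k < l) := by omega
        have h2 : ¬ (l ≤ k ∧ k < j) := by omega
        rw [if_neg h1, if_neg h2]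
      rw [Finset.sum_congr rfl heq]
      exact hM2 i j hi hij hj hne
  · simp only
    rw [map_zero, neg_eq_zero]
    apply Finset.sum_eq_zero
    intro l hl
    simp only [Finset.mem_Ioo] at hl
    by_cases hlk : l ≤ k
    · have h2 : (if l ≤ k ∧ k < n + 1 then (0:A1) else M l (n+1)) = 0 :=
        if_pos ⟨hlk, by omega⟩
      rw [h2, map_zero]
    · have h1 : (if 1 ≤ k ∧ k < l then (0:A1) else M 1 l) = 0 :=
        if_pos ⟨hk1, by omega⟩
      rw [h1, map_zero, AddMonoidHom.zero_apply]
end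

section
/- Let $p$ be a prime, $(G, \theta)$ a $p$-oriented profinite group satisfying formal Hilbert 90, and let $S$ be the discrete $G$-module with underlying group $\mathbb{Q}/\mathbb{Z}_{(p)}$ on which $G$ acts via $\theta$. Then for every open subgroup $H \subseteq G$ and every $n \geq 1$, the map $H^1(H, S[p^n]) \to H^1(H, S[p^{n-1}])$ induced by multiplication by $p$ on $S$ is surjective. -/
/-!
Induction on `n`. Given a cocycle `σ` mod `pⁿ`, formal Hilbert 90 lifts its reduction mod `p`,
up to a coboundary `dc`, to a cocycle `τ` mod `pⁿ⁺¹`. Then `τ - σ - dc'` (for a lift `c'` of `c`)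
reduced mod `pⁿ` vanishes mod `p`, so it is `p · ρ` for a cocycle `ρ` mod `pⁿ⁻¹`. By induction
`ρ` lifts, up to a coboundary, to a cocycle `ρ'` mod `pⁿ`, and `τ - p · ρ'` lifts `σ`.
-/

open scoped Padic

/-- The twisted action of `g : G` on `ℤ/pᵐℤ(1)`: multiplication by the image of
`θ g ∈ ℤ_p^×` in `ℤ/pᵐℤ`. With this action, `ℤ/pᵐℤ` is the `G`-module `S[pᵐ]`,
where `S = ℚ/ℤ_(p)` with `G` acting via `θ`. -/
noncomputable def thetaAct {p : ℕ} [Fact p.Prime] {G : Type*} [Group G]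
    (θ : G →* ℤ_[p]ˣ) (m : ℕ) (g : G) (v : ZMod (p ^ m)) : ZMod (p ^ m) :=
  PadicInt.toZModPow m ((θ g : ℤ_[p])) * v

/-- A continuous 1-cocycle of `H` valued in `ℤ/pᵐℤ(1)`. -/
def IsTwCocycle {p : ℕ} [Fact p.Prime] {G : Type*} [Group G] [TopologicalSpace G]
    (θ : G →* ℤ_[p]ˣ) (H : Subgroup G) (m : ℕ) (σ : ↥H → ZMod (p ^ m)) : Prop :=
  Continuous σ ∧ ∀ a b : ↥H, σ (a * b) = σ a + thetaAct θ m (a : G) (σ b)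

namespace ZMod

variable (p m : ℕ)

/-- Multiplication by `p`, as the embedding `ℤ/pᵐℤ ≅ pℤ/pᵐ⁺¹ℤ ⊆ ℤ/pᵐ⁺¹ℤ`. -/
def mulPowSucc : ZMod (p ^ m) →+ ZMod (p ^ (m + 1)) :=
  lift (p ^ m) ⟨(AddMonoidHom.mulLeft (p : ZMod (p ^ (m + 1)))).comp (Int.castAddHom _),
    by simp [← pow_succ']; exact_mod_cast natCast_self (p ^ (m + 1))⟩

variable {p m}

lemma mulPowSucc_intCast (a : ℤ) : mulPowSucc p m a = p * a :=
  lift_coe _ _ a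

lemma mulPowSucc_injective (hp : p ≠ 0) : Function.Injective (mulPowSucc p m) := by
  refine (injective_iff_map_eq_zero _).mpr fun x hx => ?_
  obtain ⟨a, rfl⟩ := intCast_surjective x
  rw [mulPowSucc_intCast, ← Int.cast_natCast, ← Int.cast_mul,
    intCast_zmod_eq_zero_iff_dvd, Nat.cast_pow, pow_succ',
    Int.mul_dvd_mul_iff_left (by exact_mod_cast hp)] at hx
  exact (intCast_zmod_eq_zero_iff_dvd a _).mpr (by exact_mod_cast hx)

lemma exists_mulPowSucc_eq {y : ZMod (p ^ (m + 1))} (h : p ^ 1 ∣ p ^ (m + 1))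
    (hy : castHom h (ZMod (p ^ 1)) y = 0) : ∃ x, mulPowSucc p m x = y := by
  obtain ⟨a, rfl⟩ := intCast_surjective y
  rw [map_intCast, intCast_zmod_eq_zero_iff_dvd, pow_one] at hy
  obtain ⟨b, rfl⟩ := hy
  exact ⟨b, by push_cast [mulPowSucc_intCast]; rfl⟩

lemma mulPowSucc_mul_castHom (h : p ^ m ∣ p ^ (m + 1)) (A : ZMod (p ^ (m + 1)))
    (x : ZMod (p ^ m)) : mulPowSucc p m (castHom h _ A * x) = A * mulPowSucc p m x := by
  obtain ⟨a, rfl⟩ := intCast_surjective A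
  obtain ⟨b, rfl⟩ := intCast_surjective x
  rw [map_intCast, ← Int.cast_mul, mulPowSucc_intCast, mulPowSucc_intCast]
  push_cast
  ring

lemma castHom_mulPowSucc (h : p ^ (m + 1) ∣ p ^ (m + 2)) (h' : p ^ m ∣ p ^ (m + 1))
    (x : ZMod (p ^ (m + 1))) :
    castHom h _ (mulPowSucc p (m + 1) x) = mulPowSucc p m (castHom h' _ x) := by
  obtain ⟨a, rfl⟩ := intCast_surjective x
  rw [mulPowSucc_intCast, map_mul, map_natCast, map_intCast, map_intCast, mulPowSucc_intCast]

end ZMod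

namespace PadicInt

variable {p : ℕ} [Fact p.Prime]

lemma continuous_toZModPow (m : ℕ) : Continuous (toZModPow (p := p) m) := by
  refine IsLocallyConstant.continuous <| (IsLocallyConstant.iff_exists_open _).mpr fun a => ?_
  refine ⟨Metric.ball a ((p : ℝ) ^ (-(m : ℤ))), Metric.isOpen_ball,
    Metric.mem_ball_self (zpow_pos (by exact_mod_cast (Fact.out : p.Prime).pos) _), fun b hb => ?_⟩
  have hker : b - a ∈ RingHom.ker (toZModPow (p := p) m) := by
    rw [ker_toZModPow, ← norm_le_pow_iff_mem_span_pow]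
    exact (mem_ball_iff_norm.mp hb).le
  rwa [RingHom.mem_ker, map_sub, sub_eq_zero] at hker

end PadicInt

section TwistedCocycles

variable {p : ℕ} [Fact p.Prime] {G : Type*} [Group G] (θ : G →* ℤ_[p]ˣ)

lemma thetaAct_sub (m : ℕ) (g : G) (v w : ZMod (p ^ m)) :
    thetaAct θ m g (v - w) = thetaAct θ m g v - thetaAct θ m g w :=
  mul_sub _ _ _

lemma thetaAct_mul (m : ℕ) (a b : G) (v : ZMod (p ^ m)) :
    thetaAct θ m (a * b) v = thetaAct θ m a (thetaAct θ m b v) := by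
  simp only [thetaAct, map_mul, Units.val_mul, mul_assoc]

lemma castHom_thetaAct {k m : ℕ} (hkm : k ≤ m) (g : G) (v : ZMod (p ^ m)) :
    ZMod.castHom (pow_dvd_pow p hkm) _ (thetaAct θ m g v) =
      thetaAct θ k g (ZMod.castHom (pow_dvd_pow p hkm) _ v) := by
  rw [thetaAct, thetaAct, map_mul, ZMod.castHom_apply, PadicInt.cast_toZModPow _ _ hkm]

lemma mulPowSucc_thetaAct (m : ℕ) (g : G) (v : ZMod (p ^ m)) :
    ZMod.mulPowSucc p m (thetaAct θ m g v) = thetaAct θ (m + 1) g (ZMod.mulPowSucc p m v) := by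
  rw [thetaAct, ← PadicInt.cast_toZModPow _ _ m.le_succ,
    ← ZMod.castHom_apply (h := pow_dvd_pow p m.le_succ), ZMod.mulPowSucc_mul_castHom]
  rfl

variable [TopologicalSpace G] {H : Subgroup G} {m : ℕ}

namespace IsTwCocycle

lemma sub {f g : H → ZMod (p ^ m)} (hf : IsTwCocycle θ H m f) (hg : IsTwCocycle θ H m g) :
    IsTwCocycle θ H m (f - g) := by
  refine ⟨hf.1.sub hg.1, fun a b => ?_⟩
  simp only [Pi.sub_apply, hf.2, hg.2, thetaAct_sub]
  ring

lemma castHom {k : ℕ} (hkm : k ≤ m) {f : H → ZMod (p ^ m)} (hf : IsTwCocycle θ H m f) :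
    IsTwCocycle θ H k (ZMod.castHom (pow_dvd_pow p hkm) _ ∘ f) :=
  ⟨continuous_of_discreteTopology.comp hf.1, fun a b => by
    simp only [Function.comp_apply, hf.2, map_add, castHom_thetaAct θ hkm]⟩

lemma mulPowSucc {f : H → ZMod (p ^ m)} (hf : IsTwCocycle θ H m f) :
    IsTwCocycle θ H (m + 1) (ZMod.mulPowSucc p m ∘ f) :=
  ⟨continuous_of_discreteTopology.comp hf.1, fun a b => by
    simp only [Function.comp_apply, hf.2, map_add, mulPowSucc_thetaAct]⟩

lemma of_mulPowSucc {f : H → ZMod (p ^ m)} (hf : IsTwCocycle θ H (m + 1) (ZMod.mulPowSucc p m ∘ f))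
    (hcont : Continuous f) : IsTwCocycle θ H m f :=
  ⟨hcont, fun a b => ZMod.mulPowSucc_injective (Fact.out : p.Prime).ne_zero <| by
    simpa only [Function.comp_apply, map_add, mulPowSucc_thetaAct] using hf.2 a b⟩

end IsTwCocycle

lemma isTwCocycle_coboundary (hθ : Continuous θ) (c : ZMod (p ^ m)) :
    IsTwCocycle θ H m fun h => thetaAct θ m h c - c := by
  refine ⟨?_, fun a b => ?_⟩
  · have hθH : Continuous fun h : H => ((θ h : ℤ_[p])) :=
      Units.continuous_val.comp (hθ.comp continuous_subtype_val)
    exact (continuous_of_discreteTopology (f := fun z : ZMod (p ^ m) => z * c - c)).comp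
      ((PadicInt.continuous_toZModPow m).comp hθH)
  · simp only [Subgroup.coe_mul, thetaAct_mul, thetaAct_sub]
    ring

/-- `H¹(H, ℤ/pᵐℤ(1)) → H¹(H, ℤ/pᵏℤ(1))` is onto: every cocycle mod `pᵏ` is, up to a coboundary,
the reduction of a cocycle mod `pᵐ`. -/
def H1ReductionSurjective (H : Subgroup G) (k m : ℕ) (hkm : k ≤ m) : Prop :=
  ∀ σ : H → ZMod (p ^ k), IsTwCocycle θ H k σ →
    ∃ τ : H → ZMod (p ^ m), IsTwCocycle θ H m τ ∧
      ∃ c : ZMod (p ^ k), ∀ h : H,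
        ZMod.castHom (pow_dvd_pow p hkm) _ (τ h) = σ h + (thetaAct θ k h c - c)

lemma exists_isTwCocycle_mulPowSucc_eq {δ : H → ZMod (p ^ (m + 1))}
    (hδ : IsTwCocycle θ H (m + 1) δ)
    (hred : ∀ h, ZMod.castHom (pow_dvd_pow p (Nat.le_add_left 1 m)) (ZMod (p ^ 1)) (δ h) = 0) :
    ∃ ρ : H → ZMod (p ^ m), IsTwCocycle θ H m ρ ∧ ZMod.mulPowSucc p m ∘ ρ = δ := by
  have hρ : ZMod.mulPowSucc p m ∘ (Function.invFun (ZMod.mulPowSucc p m) ∘ δ) = δ :=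
    funext fun h => Function.invFun_eq (ZMod.exists_mulPowSucc_eq _ (hred h))
  exact ⟨_, .of_mulPowSucc θ (by rwa [hρ]) (continuous_of_discreteTopology.comp hδ.1), hρ⟩

lemma h1ReductionSurjective_zero_one : H1ReductionSurjective θ H 0 1 zero_le_one := by
  have : Subsingleton (ZMod (p ^ 0)) := by rw [pow_zero]; infer_instance
  intro σ _
  refine ⟨0, ⟨continuous_const, fun a b => ?_⟩, 0, fun h => Subsingleton.elim _ _⟩
  simp [thetaAct]

lemma H1ReductionSurjective.succ (hθ : Continuous θ)
    (hFH90 : H1ReductionSurjective θ H 1 (m + 2) (by omega))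
    (ih : H1ReductionSurjective θ H m (m + 1) m.le_succ) :
    H1ReductionSurjective θ H (m + 1) (m + 2) (m + 1).le_succ := by
  intro σ hσ
  have hle : 1 ≤ m + 1 := Nat.le_add_left 1 m
  obtain ⟨τ, hτ, c, hc⟩ := hFH90 _ (hσ.castHom θ hle)
  obtain ⟨c', rfl⟩ := ZMod.castHom_surjective (pow_dvd_pow p hle) c
  -- modulo `p`, the reduction of `τ` differs from `σ` by the coboundary of `c'`
  have hδ := ((hτ.castHom θ (m + 1).le_succ).sub θ hσ).sub θ (isTwCocycle_coboundary θ hθ c')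
  obtain ⟨ρ, hρ, hιρ⟩ := exists_isTwCocycle_mulPowSucc_eq θ hδ fun h => by
    have hτσ := hc h
    simp only [Pi.sub_apply, Function.comp_apply, map_sub, castHom_thetaAct θ hle] at hτσ ⊢
    rw [← RingHom.comp_apply, ZMod.castHom_comp, hτσ]
    ring
  obtain ⟨ρ', hρ', c₂, hc₂⟩ := ih ρ hρ
  refine ⟨τ - ZMod.mulPowSucc p (m + 1) ∘ ρ', hτ.sub θ hρ'.mulPowSucc,
    c' - ZMod.mulPowSucc p m c₂, fun h => ?_⟩
  have hδh := congrFun hιρ h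
  simp only [Pi.sub_apply, Function.comp_apply] at hδh ⊢
  rw [map_sub, ZMod.castHom_mulPowSucc _ (pow_dvd_pow p m.le_succ), hc₂ h, map_add, map_sub,
    hδh, mulPowSucc_thetaAct, thetaAct_sub]
  ring

lemma h1ReductionSurjective_succ_of_formalHilbert90 (hθ : Continuous θ)
    (hFH90 : ∀ n (hn : 1 ≤ n), H1ReductionSurjective θ H 1 n hn) :
    ∀ m, H1ReductionSurjective θ H m (m + 1) m.le_succ
  | 0 => h1ReductionSurjective_zero_one θ
  | m + 1 => .succ θ hθ (hFH90 _ _) (h1ReductionSurjective_succ_of_formalHilbert90 hθ hFH90 m)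

end TwistedCocycles

theorem stmt16_general (p : ℕ) [Fact p.Prime]
    (G : Type*) [Group G] [TopologicalSpace G]
    (θ : G →* ℤ_[p]ˣ) (hθ : Continuous θ)
    (hFH90 : ∀ H : Subgroup G, IsOpen (H : Set G) → ∀ n : ℕ, (hn1 : 1 ≤ n) →
      ∀ σ : ↥H → ZMod (p ^ 1), IsTwCocycle θ H 1 σ →
        ∃ τ : ↥H → ZMod (p ^ n), IsTwCocycle θ H n τ ∧
          ∃ c : ZMod (p ^ 1), ∀ h : ↥H,
            ZMod.castHom (pow_dvd_pow p hn1) (ZMod (p ^ 1)) (τ h) =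
              σ h + (thetaAct θ 1 (h : G) c - c)) :
    ∀ H : Subgroup G, IsOpen (H : Set G) → ∀ n : ℕ, 1 ≤ n →
      ∀ σ : ↥H → ZMod (p ^ (n - 1)), IsTwCocycle θ H (n - 1) σ →
        ∃ τ : ↥H → ZMod (p ^ n), IsTwCocycle θ H n τ ∧
          ∃ c : ZMod (p ^ (n - 1)), ∀ h : ↥H,
            ZMod.castHom (pow_dvd_pow p (Nat.sub_le n 1)) (ZMod (p ^ (n - 1))) (τ h) =
              σ h + (thetaAct θ (n - 1) (h : G) c - c) := by
  intro H hH n hn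
  obtain ⟨m, rfl⟩ := Nat.exists_eq_add_of_le' hn
  exact h1ReductionSurjective_succ_of_formalHilbert90 θ hθ (hFH90 H hH) m

/-- Let `(G, θ)` be a `p`-oriented profinite group satisfying formal
Hilbert 90 (for every open `H ⊆ G` and `n ≥ 1`, the map
`H¹(H, S[pⁿ]) → H¹(H, S[p])` induced by multiplication by `p^{n-1}` is surjective).
Then for every open `H ⊆ G` and every `n ≥ 1`, the map
`H¹(H, S[pⁿ]) → H¹(H, S[pⁿ⁻¹])` induced by multiplication by `p` is surjective.
Here `S[pᵐ] ≅ ℤ/pᵐℤ(1)` and both induced maps correspond to the canonical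
reduction `ℤ/pⁿℤ → ℤ/pᵐℤ`; surjectivity on `H¹` is expressed at the level of
cocycles, up to a coboundary. -/
theorem stmt16 (p : ℕ) [Fact p.Prime]
    (G : Type*) [Group G] [TopologicalSpace G] [IsTopologicalGroup G]
    [CompactSpace G] [TotallyDisconnectedSpace G]
    (θ : G →* ℤ_[p]ˣ) (hθ : Continuous θ)
    (hFH90 : ∀ H : Subgroup G, IsOpen (H : Set G) → ∀ n : ℕ, (hn1 : 1 ≤ n) →
      ∀ σ : ↥H → ZMod (p ^ 1), IsTwCocycle θ H 1 σ →
        ∃ τ : ↥H → ZMod (p ^ n), IsTwCocycle θ H n τ ∧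
          ∃ c : ZMod (p ^ 1), ∀ h : ↥H,
            ZMod.castHom (pow_dvd_pow p hn1) (ZMod (p ^ 1)) (τ h) =
              σ h + (thetaAct θ 1 (h : G) c - c)) :
    ∀ H : Subgroup G, IsOpen (H : Set G) → ∀ n : ℕ, 1 ≤ n →
      ∀ σ : ↥H → ZMod (p ^ (n - 1)), IsTwCocycle θ H (n - 1) σ →
        ∃ τ : ↥H → ZMod (p ^ n), IsTwCocycle θ H n τ ∧
          ∃ c : ZMod (p ^ (n - 1)), ∀ h : ↥H,
            ZMod.castHom (pow_dvd_pow p (Nat.sub_le n 1)) (ZMod (p ^ (n - 1))) (τ h) =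
              σ h + (thetaAct θ (n - 1) (h : G) c - c) :=
  stmt16_general p G θ hθ hFH90
end
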